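/- Let 0 < β < 1 and let Ω ⊂ ℝ be a compact set of positive finite Lebesgue measure such that there are c₁, c₂ > 0 and δ > 0 with c₁|t|^β ≤ (ω₂[χ_Ω](t))² ≤ c₂|t|^β for all 0 < |t| ≤ δ. Then the d-fold product Ω^d ⊂ ℝ^d satisfies: there are C₁, C₂ > 0 and δ' > 0 with C₁|h|^β ≤ (ω₂[χ_{Ω^d}](h))² ≤ C₂|h|^β for all h ∈ ℝ^d with 0 < |h| ≤ δ'. -/

import Mathlib

/-!
`χ_S(x + h) - χ_S(x)` is (up to sign) the indicator of `(S - h) ∆ S`, so `ω₂[χ_S](h)²` is the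
measure of that symmetric difference. For a box `Ω^d` this symmetric difference contains the
box with `i`-th side `(Ω - hᵢ) ∆ Ω` and the other sides `(Ω - hⱼ) ∩ Ω`, and is covered by the
`d` boxes with `i`-th side `(Ω - hᵢ) ∆ Ω` and the other sides `(Ω - hⱼ) ∪ Ω`. The union has
measure at most `2|Ω|`; for small `t` the one-dimensional upper bound makes `(Ω - t) ∆ Ω` smaller
than `|Ω|/2`, so the intersection has measure at least `|Ω|/2`. Choosing `i` with `|hᵢ|` maximal,
hence `|h| ≤ √d |hᵢ|`, gives the lower bound; summing over `i` gives the upper bound.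
-/

open MeasureTheory
open scoped ENNReal

noncomputable section

/-- Euclidean space `ℝ^d`. -/
abbrev Ed (d : ℕ) := EuclideanSpace ℝ (Fin d)

/-- The `L²(ℝ)` modulus of continuity of `g : ℝ → ℂ`. -/
def omega2R (g : ℝ → ℂ) (t : ℝ) : ℝ≥0∞ :=
  eLpNorm (fun x => g (x + t) - g x) 2 volume

/-- The `L²(ℝ^d)` modulus of continuity. -/
def omega2 {d : ℕ} (g : Ed d → ℂ) (h : Ed d) : ℝ≥0∞ :=
  eLpNorm (fun x => g (x + h) - g x) 2 volume

open Set
open scoped symmDiff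

theorem sq_eLpNorm_indicator_comp_sub_indicator {α : Type*} [MeasurableSpace α] (μ : Measure α)
    {S : Set α} (hS : MeasurableSet S) {f : α → α} (hf : Measurable f) :
    eLpNorm (fun x => S.indicator (fun _ => (1 : ℂ)) (f x) - S.indicator (fun _ => 1) x) 2 μ ^ 2
      = μ ((f ⁻¹' S) ∆ S) := by
  have hcomp : (fun x => S.indicator (fun _ => (1 : ℂ)) (f x) - S.indicator (fun _ => 1) x)
      = (f ⁻¹' S).indicator (fun _ => 1) - S.indicator (fun _ => 1) := rfl
  rw [hcomp, eLpNorm_indicator_sub_indicator,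
    eLpNorm_indicator_const ((hf hS).symmDiff hS) two_ne_zero ENNReal.ofNat_ne_top,
    enorm_one, one_mul, ← ENNReal.rpow_natCast, ← ENNReal.rpow_mul]
  norm_num

theorem measure_le_inter_add_symmDiff {α : Type*} [MeasurableSpace α] (μ : Measure α)
    (A B : Set α) : μ B ≤ μ (A ∩ B) + μ (A ∆ B) :=
  (measure_mono fun x hB => by by_cases hA : x ∈ A <;> simp [hA, hB, mem_symmDiff]).trans
    (measure_union_le _ _)

namespace MeasureTheory.Measure

variable {ι : Type*} [Fintype ι] [DecidableEq ι] {α : ι → Type*} [∀ i, MeasurableSpace (α i)]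
  (μ : ∀ i, Measure (α i)) [∀ i, SigmaFinite (μ i)]

theorem pi_univ_pi_update (s : ∀ i, Set (α i)) (i : ι) (t : Set (α i)) :
    Measure.pi μ (univ.pi (Function.update s i t)) = μ i t * ∏ j ∈ {i}ᶜ, μ j (s j) := by
  rw [pi_pi, Fintype.prod_eq_mul_prod_compl i, Function.update_self]
  congr 1
  refine Finset.prod_congr rfl fun j hj => ?_
  rw [Function.update_of_ne (by simpa using hj)]

theorem mul_prod_inter_le_pi_symmDiff (A B : ∀ i, Set (α i)) (i : ι) :
    μ i (A i ∆ B i) * ∏ j ∈ {i}ᶜ, μ j (A j ∩ B j) ≤ Measure.pi μ (univ.pi A ∆ univ.pi B) := by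
  rw [← pi_univ_pi_update]
  refine measure_mono fun x hx => ?_
  simp only [mem_univ_pi, mem_symmDiff] at hx ⊢
  have hxj : ∀ j ≠ i, x j ∈ A j ∩ B j := fun j hj => by
    simpa [Function.update_of_ne hj] using hx j
  rcases (by simpa using hx i : x i ∈ A i ∆ B i) with ⟨hA, hB⟩ | ⟨hB, hA⟩
  · refine Or.inl ⟨fun j => ?_, fun h => hB (h i)⟩
    rcases eq_or_ne j i with rfl | hj
    exacts [hA, (hxj j hj).1]
  · refine Or.inr ⟨fun j => ?_, fun h => hA (h i)⟩
    rcases eq_or_ne j i with rfl | hj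
    exacts [hB, (hxj j hj).2]

theorem pi_symmDiff_le_sum_mul_prod_union (A B : ∀ i, Set (α i)) :
    Measure.pi μ (univ.pi A ∆ univ.pi B)
      ≤ ∑ i, μ i (A i ∆ B i) * ∏ j ∈ {i}ᶜ, μ j (A j ∪ B j) := by
  simp only [← pi_univ_pi_update]
  refine (measure_mono fun x hx => ?_).trans (measure_iUnion_fintype_le _ _)
  simp only [mem_univ_pi, mem_symmDiff] at hx
  have hxj : ∀ j, x j ∈ A j ∪ B j := by
    rcases hx with ⟨hA, -⟩ | ⟨hB, -⟩
    exacts [fun j => Or.inl (hA j), fun j => Or.inr (hB j)]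
  obtain ⟨i, hi⟩ : ∃ i, x i ∈ A i ∆ B i := by
    rcases hx with ⟨hA, hB⟩ | ⟨hB, hA⟩
    · obtain ⟨i, hi⟩ := not_forall.1 hB
      exact ⟨i, Or.inl ⟨hA i, hi⟩⟩
    · obtain ⟨i, hi⟩ := not_forall.1 hA
      exact ⟨i, Or.inr ⟨hB i, hi⟩⟩
  refine mem_iUnion.2 ⟨i, mem_univ_pi.2 fun j => ?_⟩
  rcases eq_or_ne j i with rfl | hj
  · simpa using hi
  · simpa [Function.update_of_ne hj] using hxj j

end MeasureTheory.Measure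

theorem EuclideanSpace.exists_norm_le_sqrt_card_mul_abs {ι : Type*} [Fintype ι] [Nonempty ι]
    (x : EuclideanSpace ℝ ι) : ∃ i, ‖x‖ ≤ √(Fintype.card ι) * |x i| := by
  obtain ⟨i, -, hi⟩ := Finset.exists_max_image Finset.univ (fun j => |x j|) Finset.univ_nonempty
  refine ⟨i, ?_⟩
  have hsq : ‖x‖ ^ 2 ≤ Fintype.card ι * |x i| ^ 2 := by
    rw [EuclideanSpace.real_norm_sq_eq]
    calc ∑ j, x j ^ 2 ≤ ∑ _j : ι, |x i| ^ 2 := Finset.sum_le_sum fun j _ =>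
          sq_le_sq.2 (by simpa using hi j (Finset.mem_univ j))
      _ = Fintype.card ι * |x i| ^ 2 := by simp
  calc ‖x‖ = √(‖x‖ ^ 2) := (Real.sqrt_sq (norm_nonneg x)).symm
    _ ≤ √(Fintype.card ι * |x i| ^ 2) := Real.sqrt_le_sqrt hsq
    _ = √(Fintype.card ι) * |x i| := by
      rw [Real.sqrt_mul (Nat.cast_nonneg _), Real.sqrt_sq (abs_nonneg _)]

theorem EuclideanSpace.abs_apply_le_norm {ι : Type*} [Fintype ι] (x : EuclideanSpace ℝ ι)
    (i : ι) : |x i| ≤ ‖x‖ := by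
  simpa using PiLp.norm_apply_le x i

theorem exists_pos_le_forall_mul_rpow_le {β c ε : ℝ} (hβ : 0 < β) (hc : 0 < c) (hε : 0 < ε)
    {δ : ℝ} (hδ : 0 < δ) : ∃ δ' ∈ Ioc 0 δ, ∀ t, 0 ≤ t → t ≤ δ' → c * t ^ β ≤ ε := by
  refine ⟨min δ ((ε / c) ^ β⁻¹), ⟨by positivity, min_le_left _ _⟩, fun t ht0 ht => ?_⟩
  have htβ : t ^ β ≤ ε / c := by
    calc t ^ β ≤ ((ε / c) ^ β⁻¹) ^ β :=
          Real.rpow_le_rpow ht0 (ht.trans (min_le_right _ _)) hβ.le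
      _ = ε / c := Real.rpow_inv_rpow (by positivity) hβ.ne'
  calc c * t ^ β ≤ c * (ε / c) := by gcongr
    _ = ε := mul_div_cancel₀ ε hc.ne'

section Translates

variable {Ω : Set ℝ}

theorem sq_omega2R_indicator (hΩ : MeasurableSet Ω) (t : ℝ) :
    omega2R (Ω.indicator fun _ => (1 : ℂ)) t ^ 2 = volume (((· + t) ⁻¹' Ω) ∆ Ω) :=
  sq_eLpNorm_indicator_comp_sub_indicator volume hΩ (measurable_add_const t)

theorem sq_omega2_indicator_cube {d : ℕ} (hΩ : MeasurableSet Ω) (h : Ed d) :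
    omega2 ({x : Ed d | ∀ i, x i ∈ Ω}.indicator fun _ => (1 : ℂ)) h ^ 2
      = volume (univ.pi (fun i => (· + h i) ⁻¹' Ω) ∆ univ.pi fun _ => Ω) := by
  have hcube : MeasurableSet {x : Ed d | ∀ i, x i ∈ Ω} := by measurability
  have hpre : ((· + h) ⁻¹' {x : Ed d | ∀ i, x i ∈ Ω}) ∆ {x | ∀ i, x i ∈ Ω}
      = (MeasurableEquiv.toLp 2 (Fin d → ℝ)).symm ⁻¹'
          (univ.pi (fun i => (· + h i) ⁻¹' Ω) ∆ univ.pi fun _ => Ω) := by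
    ext x
    simp [mem_symmDiff]
  rw [omega2, sq_eLpNorm_indicator_comp_sub_indicator volume hcube (measurable_add_const h), hpre,
    (EuclideanSpace.volume_preserving_symm_measurableEquiv_toLp _).measure_preimage_equiv]

theorem volume_preimage_add_symmDiff_le_of_abs_le {c β δ : ℝ}
    (hup : ∀ t : ℝ, 0 < |t| → |t| ≤ δ →
      volume (((· + t) ⁻¹' Ω) ∆ Ω) ≤ ENNReal.ofReal (c * |t| ^ β))
    {t : ℝ} (ht : |t| ≤ δ) : volume (((· + t) ⁻¹' Ω) ∆ Ω) ≤ ENNReal.ofReal (c * |t| ^ β) := by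
  rcases eq_or_ne t 0 with rfl | ht0
  · simp
  · exact hup t (abs_pos.2 ht0) ht

variable {ι : Type*} [Fintype ι]

theorem half_le_volume_inter_preimage_add (hΩ : volume Ω ≠ ∞) {t : ℝ}
    (ht : volume (((· + t) ⁻¹' Ω) ∆ Ω) ≤ volume Ω / 2) :
    volume Ω / 2 ≤ volume (((· + t) ⁻¹' Ω) ∩ Ω) := by
  rw [← ENNReal.sub_half hΩ, tsub_le_iff_right]
  exact (measure_le_inter_add_symmDiff volume _ Ω).trans (by gcongr)

theorem mul_half_pow_le_volume_pi_symmDiff (hΩ : volume Ω ≠ ∞) (h : ι → ℝ) (i : ι)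
    (hsmall : ∀ j, volume (((· + h j) ⁻¹' Ω) ∆ Ω) ≤ volume Ω / 2) :
    volume (((· + h i) ⁻¹' Ω) ∆ Ω) * (volume Ω / 2) ^ (Fintype.card ι - 1)
      ≤ volume (univ.pi (fun j => (· + h j) ⁻¹' Ω) ∆ univ.pi fun _ => Ω) := by
  classical
  refine le_trans ?_ (Measure.mul_prod_inter_le_pi_symmDiff (fun _ => volume) _ _ i)
  gcongr
  calc (volume Ω / 2) ^ (Fintype.card ι - 1) = ∏ _j ∈ ({i}ᶜ : Finset ι), volume Ω / 2 := by
        simp [Finset.card_compl]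
    _ ≤ _ := Finset.prod_le_prod' fun j _ => half_le_volume_inter_preimage_add hΩ (hsmall j)

theorem volume_pi_symmDiff_le_sum_mul_two_mul_pow (h : ι → ℝ) :
    volume (univ.pi (fun j => (· + h j) ⁻¹' Ω) ∆ univ.pi fun _ => Ω)
      ≤ ∑ i, volume (((· + h i) ⁻¹' Ω) ∆ Ω) * (2 * volume Ω) ^ (Fintype.card ι - 1) := by
  classical
  refine (Measure.pi_symmDiff_le_sum_mul_prod_union (fun _ => volume) _ _).trans ?_
  gcongr with i
  calc ∏ j ∈ ({i}ᶜ : Finset ι), volume (((· + h j) ⁻¹' Ω) ∪ Ω)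
      ≤ ∏ _j ∈ ({i}ᶜ : Finset ι), 2 * volume Ω := Finset.prod_le_prod' fun j _ =>
        (measure_union_le _ _).trans_eq (by rw [measure_preimage_add_right, two_mul])
    _ = (2 * volume Ω) ^ (Fintype.card ι - 1) := by simp [Finset.card_compl]

theorem exists_forall_volume_preimage_add_symmDiff_le_half {c β δ : ℝ} (hβ : 0 < β)
    (hc : 0 < c) (hδ : 0 < δ) (hΩ0 : volume Ω ≠ 0) (hΩ : volume Ω ≠ ∞)
    (hup : ∀ t : ℝ, |t| ≤ δ → volume (((· + t) ⁻¹' Ω) ∆ Ω) ≤ ENNReal.ofReal (c * |t| ^ β)) :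
    ∃ δ' ∈ Ioc 0 δ, ∀ t : ℝ, |t| ≤ δ' → volume (((· + t) ⁻¹' Ω) ∆ Ω) ≤ volume Ω / 2 := by
  have hm : 0 < (volume Ω).toReal / 2 := half_pos (ENNReal.toReal_pos hΩ0 hΩ)
  obtain ⟨δ', ⟨hδ'0, hδ'δ⟩, hδ'⟩ := exists_pos_le_forall_mul_rpow_le hβ hc hm hδ
  refine ⟨δ', ⟨hδ'0, hδ'δ⟩, fun t ht => (hup t (ht.trans hδ'δ)).trans ?_⟩
  calc ENNReal.ofReal (c * |t| ^ β) ≤ ENNReal.ofReal ((volume Ω).toReal / 2) :=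
        ENNReal.ofReal_le_ofReal (hδ' _ (abs_nonneg t) ht)
    _ = volume Ω / 2 := by
        rw [ENNReal.ofReal_div_of_pos two_pos, ENNReal.ofReal_toReal hΩ, ENNReal.ofReal_ofNat]

theorem ofReal_mul_rpow_le_volume_pi_symmDiff [Nonempty ι] (hΩ : volume Ω ≠ ∞) {c β δ : ℝ}
    (hc : 0 ≤ c) (hβ : 0 ≤ β)
    (hlow : ∀ t : ℝ, 0 < |t| → |t| ≤ δ →
      ENNReal.ofReal (c * |t| ^ β) ≤ volume (((· + t) ⁻¹' Ω) ∆ Ω))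
    (hsmall : ∀ t : ℝ, |t| ≤ δ → volume (((· + t) ⁻¹' Ω) ∆ Ω) ≤ volume Ω / 2)
    {h : EuclideanSpace ℝ ι} (h0 : 0 < ‖h‖) (hle : ‖h‖ ≤ δ) :
    ENNReal.ofReal
        (c * ((volume Ω / 2) ^ (Fintype.card ι - 1)).toReal / √(Fintype.card ι) ^ β * ‖h‖ ^ β)
      ≤ volume (univ.pi (fun i => (· + h i) ⁻¹' Ω) ∆ univ.pi fun _ => Ω) := by
  obtain ⟨i, hi⟩ := EuclideanSpace.exists_norm_le_sqrt_card_mul_abs h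
  have hi0 : 0 < |h i| := pos_of_mul_pos_right (h0.trans_le hi) (Real.sqrt_nonneg _)
  have hnorm : ‖h‖ ^ β ≤ √(Fintype.card ι) ^ β * |h i| ^ β := by
    rw [← Real.mul_rpow (by positivity) (abs_nonneg _)]
    exact Real.rpow_le_rpow (norm_nonneg _) hi hβ
  have hcoord (j : ι) : |h j| ≤ δ := (EuclideanSpace.abs_apply_le_norm h j).trans hle
  set K := (volume Ω / 2) ^ (Fintype.card ι - 1)
  have hK : K ≠ ∞ := ENNReal.pow_ne_top (ENNReal.div_ne_top hΩ two_ne_zero)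
  calc ENNReal.ofReal (c * K.toReal / √(Fintype.card ι) ^ β * ‖h‖ ^ β)
      ≤ ENNReal.ofReal (c * |h i| ^ β * K.toReal) := by
        refine ENNReal.ofReal_le_ofReal ((mul_le_mul_of_nonneg_left hnorm ?_).trans_eq ?_)
        · positivity
        · field_simp
    _ = ENNReal.ofReal (c * |h i| ^ β) * K := by
        rw [ENNReal.ofReal_mul (by positivity), ENNReal.ofReal_toReal hK]
    _ ≤ volume (((· + h i) ⁻¹' Ω) ∆ Ω) * K := by gcongr; exact hlow _ hi0 (hcoord i)
    _ ≤ _ := mul_half_pow_le_volume_pi_symmDiff hΩ h i fun j => hsmall _ (hcoord j)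

theorem volume_pi_symmDiff_le_ofReal_mul_rpow (hΩ : volume Ω ≠ ∞) {c β δ : ℝ}
    (hc : 0 ≤ c) (hβ : 0 ≤ β)
    (hup : ∀ t : ℝ, |t| ≤ δ → volume (((· + t) ⁻¹' Ω) ∆ Ω) ≤ ENNReal.ofReal (c * |t| ^ β))
    {h : EuclideanSpace ℝ ι} (hle : ‖h‖ ≤ δ) :
    volume (univ.pi (fun i => (· + h i) ⁻¹' Ω) ∆ univ.pi fun _ => Ω)
      ≤ ENNReal.ofReal
          (Fintype.card ι * c * ((2 * volume Ω) ^ (Fintype.card ι - 1)).toReal * ‖h‖ ^ β) := by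
  set K := (2 * volume Ω) ^ (Fintype.card ι - 1)
  have hK : K ≠ ∞ := ENNReal.pow_ne_top (ENNReal.mul_ne_top ENNReal.ofNat_ne_top hΩ)
  calc _ ≤ ∑ i, volume (((· + h i) ⁻¹' Ω) ∆ Ω) * K :=
        volume_pi_symmDiff_le_sum_mul_two_mul_pow h
    _ ≤ ∑ _i : ι, ENNReal.ofReal (c * ‖h‖ ^ β) * K := by
        gcongr with i
        exact (hup _ ((EuclideanSpace.abs_apply_le_norm h i).trans hle)).trans
          (ENNReal.ofReal_le_ofReal (by gcongr; exact EuclideanSpace.abs_apply_le_norm h i))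
    _ = ENNReal.ofReal (Fintype.card ι * c * K.toReal * ‖h‖ ^ β) := by
        rw [Finset.sum_const, Finset.card_univ, nsmul_eq_mul, ← ENNReal.ofReal_toReal hK,
          ← ENNReal.ofReal_mul (by positivity), ← ENNReal.ofReal_natCast,
          ← ENNReal.ofReal_mul (by positivity), ENNReal.toReal_ofReal (by positivity)]
        ring_nf

end Translates

/-- the `d`-dimensional part of Lemma `lemex`: if a compact `Ω ⊂ ℝ` of
positive finite measure satisfies the two-sided estimate
`c₁|t|^β ≤ (ω₂[χ_Ω](t))² ≤ c₂|t|^β` for small `t`, then the `d`-fold product `Ω^d ⊂ ℝ^d`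
satisfies `C₁|h|^β ≤ (ω₂[χ_{Ω^d}](h))² ≤ C₂|h|^β` for all small `h ≠ 0`. -/
theorem statement19 (d : ℕ) (hd : 0 < d) (β : ℝ) (hβ : 0 < β ∧ β < 1)
    (Ω : Set ℝ) (hΩcomp : IsCompact Ω) (hΩpos : 0 < volume Ω) (hΩfin : volume Ω < ⊤)
    (c₁ c₂ δ : ℝ) (hc₁ : 0 < c₁) (hc₂ : 0 < c₂) (hδ : 0 < δ)
    (hΩreg : ∀ t : ℝ, 0 < |t| → |t| ≤ δ →
      ENNReal.ofReal (c₁ * |t| ^ β) ≤ (omega2R (Set.indicator Ω fun _ => (1 : ℂ)) t) ^ 2 ∧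
      (omega2R (Set.indicator Ω fun _ => (1 : ℂ)) t) ^ 2 ≤ ENNReal.ofReal (c₂ * |t| ^ β)) :
    ∃ C₁ C₂ δ' : ℝ, 0 < C₁ ∧ 0 < C₂ ∧ 0 < δ' ∧
      ∀ h : Ed d, 0 < ‖h‖ → ‖h‖ ≤ δ' →
        ENNReal.ofReal (C₁ * ‖h‖ ^ β) ≤
          (omega2 (Set.indicator {x : Ed d | ∀ i, x i ∈ Ω} fun _ => (1 : ℂ)) h) ^ 2 ∧
        (omega2 (Set.indicator {x : Ed d | ∀ i, x i ∈ Ω} fun _ => (1 : ℂ)) h) ^ 2 ≤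
          ENNReal.ofReal (C₂ * ‖h‖ ^ β) := by
  have hΩ := hΩcomp.measurableSet
  simp only [sq_omega2R_indicator hΩ] at hΩreg
  have hup (t : ℝ) (ht : |t| ≤ δ) := volume_preimage_add_symmDiff_le_of_abs_le
    (fun t h0 ht => (hΩreg t h0 ht).2) ht
  obtain ⟨δ', ⟨hδ'0, hδ'δ⟩, hsmall⟩ := exists_forall_volume_preimage_add_symmDiff_le_half
    hβ.1 hc₂ hδ hΩpos.ne' hΩfin.ne hup
  have hK₁ : 0 < ((volume Ω / 2) ^ (d - 1)).toReal :=
    ENNReal.toReal_pos (by simp [hΩpos.ne'])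
      (ENNReal.pow_ne_top (ENNReal.div_ne_top hΩfin.ne two_ne_zero))
  have hK₂ : 0 < ((2 * volume Ω) ^ (d - 1)).toReal :=
    ENNReal.toReal_pos (by simp [hΩpos.ne'])
      (ENNReal.pow_ne_top (ENNReal.mul_ne_top ENNReal.ofNat_ne_top hΩfin.ne))
  refine ⟨c₁ * ((volume Ω / 2) ^ (d - 1)).toReal / √d ^ β,
    d * c₂ * ((2 * volume Ω) ^ (d - 1)).toReal, δ', by positivity, by positivity, hδ'0,
    fun h h0 hle => ?_⟩
  have : Nonempty (Fin d) := Fin.pos_iff_nonempty.1 hd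
  rw [sq_omega2_indicator_cube hΩ]
  constructor
  · simpa using ofReal_mul_rpow_le_volume_pi_symmDiff hΩfin.ne hc₁.le hβ.1.le
      (fun t h0 ht => (hΩreg t h0 (ht.trans hδ'δ)).1) hsmall h0 hle
  · simpa using volume_pi_symmDiff_le_ofReal_mul_rpow hΩfin.ne hc₂.le hβ.1.le hup
      (hle.trans hδ'δ)
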